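/- arXiv:1210.4088 — 2 statements merged into one kernel-verified Lean document; each statement's English description precedes it below -/
import Mathlib

section
/- For b > 0 define X₂(ξ, b) = ξ² − b² X₃( (2ξ + √(4ξ² + b²)) / b ), where X₃(z) = (1/8) ln² z + (1/16)(z² − z⁻²) ln z − (1/32)(z² + z⁻²). Then for every ξ ∈ ℝ the partial derivative of X₂ with respect to ξ equals (∂X₂/∂ξ)(ξ, b) = 2ξ − √(4ξ² + b²) · ln( (2ξ + √(4ξ² + b²)) / b ). -/
/-!
With `s = √(4ξ² + b²)` and `z = (2ξ + s)/b` one has `z⁻¹ = (s - 2ξ)/b`, hence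
`z + z⁻¹ = 2s/b` and `dz/dξ = 2z/s`. Differentiating `X₃`, the terms without a logarithm
cancel and `X₃'(z) = log z · (z + z⁻¹)² / (8z)`, so by the chain rule
`d/dξ (b² X₃(z)) = s log z`.
-/

open Real

theorem hasDerivAt_X₃_formula {z : ℝ} (hz : z ≠ 0) :
    HasDerivAt (fun z : ℝ => (1/8) * (log z) ^ 2 + (1/16) * (z ^ 2 - (z ^ 2)⁻¹) * log z -
        (1/32) * (z ^ 2 + (z ^ 2)⁻¹))
      (log z * (z + z⁻¹) ^ 2 / (8 * z)) z := by
  have hlog := hasDerivAt_log hz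
  have hsq : HasDerivAt (fun z : ℝ => z ^ 2) (2 * z) z := by
    simpa using hasDerivAt_pow 2 z
  have hinv : HasDerivAt (fun z : ℝ => (z ^ 2)⁻¹) (-(2 * z) / (z ^ 2) ^ 2) z :=
    hsq.fun_inv (pow_ne_zero 2 hz)
  refine (((hlog.fun_pow 2).const_mul (1/8)).fun_add
      (((hsq.fun_sub hinv).const_mul (1/16)).fun_mul hlog) |>.fun_sub
      ((hsq.fun_add hinv).const_mul (1/32))).congr_deriv ?_
  field_simp
  ring

section Substitution

variable {b : ℝ}

theorem sqrt_four_sq_add_sq_pos (hb : b ≠ 0) (ξ : ℝ) : 0 < √(4 * ξ ^ 2 + b ^ 2) :=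
  sqrt_pos.mpr (by positivity)

theorem sq_sqrt_four_sq_add_sq (ξ : ℝ) : √(4 * ξ ^ 2 + b ^ 2) ^ 2 = 4 * ξ ^ 2 + b ^ 2 :=
  sq_sqrt (by positivity)

theorem two_mul_add_sqrt_four_sq_add_sq_pos (hb : b ≠ 0) (ξ : ℝ) :
    0 < 2 * ξ + √(4 * ξ ^ 2 + b ^ 2) := by
  nlinarith [sqrt_four_sq_add_sq_pos hb ξ, sq_sqrt_four_sq_add_sq (b := b) ξ,
    sq_pos_of_ne_zero hb]

theorem two_mul_add_sqrt_div_add_inv (hb : b ≠ 0) (ξ : ℝ) :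
    (2 * ξ + √(4 * ξ ^ 2 + b ^ 2)) / b + ((2 * ξ + √(4 * ξ ^ 2 + b ^ 2)) / b)⁻¹ =
      2 * √(4 * ξ ^ 2 + b ^ 2) / b := by
  have hne := (two_mul_add_sqrt_four_sq_add_sq_pos hb ξ).ne'
  have hsq := sq_sqrt_four_sq_add_sq (b := b) ξ
  generalize √(4 * ξ ^ 2 + b ^ 2) = s at *
  field_simp
  linear_combination -hsq

theorem hasDerivAt_two_mul_add_sqrt_div (hb : b ≠ 0) (ξ : ℝ) :
    HasDerivAt (fun ξ : ℝ => (2 * ξ + √(4 * ξ ^ 2 + b ^ 2)) / b)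
      (2 * ((2 * ξ + √(4 * ξ ^ 2 + b ^ 2)) / b) / √(4 * ξ ^ 2 + b ^ 2)) ξ := by
  have hrad : HasDerivAt (fun ξ : ℝ => 4 * ξ ^ 2 + b ^ 2) (8 * ξ) ξ := by
    simpa using ((hasDerivAt_pow 2 ξ).const_mul 4).add_const (b ^ 2) |>.congr_deriv (by ring)
  refine ((((hasDerivAt_id ξ).const_mul 2).add (hrad.sqrt (by positivity))).div_const b)
    |>.congr_deriv ?_
  field_simp
  ring

end Substitution

/-- For `b > 0` and `X₂(ξ, b) = ξ² − b² X₃((2ξ + √(4ξ² + b²))/b)`, the partial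
derivative of `X₂` in `ξ` is `2ξ − √(4ξ² + b²) ln((2ξ + √(4ξ² + b²))/b)`. -/
theorem X2_deriv
    (b : ℝ) (hb : 0 < b) (X₃ : ℝ → ℝ) (X₂ : ℝ → ℝ)
    (hX₃ : ∀ z : ℝ, X₃ z =
      (1/8) * (Real.log z) ^ 2 + (1/16) * (z ^ 2 - (z ^ 2)⁻¹) * Real.log z -
      (1/32) * (z ^ 2 + (z ^ 2)⁻¹))
    (hX₂ : ∀ ξ : ℝ, X₂ ξ =
      ξ ^ 2 - b ^ 2 * X₃ ((2 * ξ + Real.sqrt (4 * ξ ^ 2 + b ^ 2)) / b)) :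
    ∀ ξ : ℝ, HasDerivAt X₂
      (2 * ξ - Real.sqrt (4 * ξ ^ 2 + b ^ 2) *
        Real.log ((2 * ξ + Real.sqrt (4 * ξ ^ 2 + b ^ 2)) / b)) ξ := by
  intro ξ
  have hz := hasDerivAt_two_mul_add_sqrt_div hb.ne' ξ
  have hz_pos := div_pos (two_mul_add_sqrt_four_sq_add_sq_pos hb.ne' ξ) hb
  have hne := (two_mul_add_sqrt_four_sq_add_sq_pos hb.ne' ξ).ne'
  have hX₃' := funext hX₃ ▸ hasDerivAt_X₃_formula hz_pos.ne'
  rw [funext hX₂]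
  refine ((hasDerivAt_pow 2 ξ).fun_sub ((hX₃'.comp ξ hz).const_mul (b ^ 2))).congr_deriv ?_
  rw [two_mul_add_sqrt_div_add_inv hb.ne']
  generalize √(4 * ξ ^ 2 + b ^ 2) = s at *
  field_simp
  ring
end

section
/- For fixed b > 0, the function X₂(ξ, b) = ξ² − b² X₃( (2ξ + √(4ξ² + b²)) / b ), with X₃(z) = (1/8) ln² z + (1/16)(z² − z⁻²) ln z − (1/32)(z² + z⁻²), satisfies the asymptotics X₂(ξ, b) = ξ² (3/2 − 2 ln 2 + ln b − ln ξ) + O(ln² ξ) as ξ → +∞. -/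
open Filter Asymptotics Real

/-!
With `x = 2ξ/b` the argument of `X₃` is `exp (arsinh x)`, so the double-angle formulas turn
`X₃` into a polynomial in `arsinh x`, `x` and `√(1 + x²)`. After subtracting
`ξ² (3/2 - ln (4ξ/b))`, what remains is `b²` times a combination of `arsinh² x`,
`arsinh x · (x√(1 + x²) - x²)` and `x² (arsinh x - ln (2x))`; the last two factors lie in
`[0, 1/2]` and `[0, 1/4]`, and `arsinh x = O(ln x)`, so everything is `O(ln² ξ)`.
-/

noncomputable def X3 (z : ℝ) : ℝ :=
  (1/8) * (log z) ^ 2 + (1/16) * (z ^ 2 - (z ^ 2)⁻¹) * log z - (1/32) * (z ^ 2 + (z ^ 2)⁻¹)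

lemma exp_arsinh_sq_sub_inv (x : ℝ) :
    exp (arsinh x) ^ 2 - (exp (arsinh x) ^ 2)⁻¹ = 4 * (x * √(1 + x ^ 2)) :=
  calc exp (arsinh x) ^ 2 - (exp (arsinh x) ^ 2)⁻¹ = 2 * sinh (2 * arsinh x) := by
        rw [← exp_nat_mul, ← exp_neg, sinh_eq]; push_cast; ring_nf
    _ = 4 * (sinh (arsinh x) * cosh (arsinh x)) := by rw [sinh_two_mul]; ring
    _ = 4 * (x * √(1 + x ^ 2)) := by rw [sinh_arsinh, cosh_arsinh]

lemma exp_arsinh_sq_add_inv (x : ℝ) :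
    exp (arsinh x) ^ 2 + (exp (arsinh x) ^ 2)⁻¹ = 2 * (1 + 2 * x ^ 2) :=
  calc exp (arsinh x) ^ 2 + (exp (arsinh x) ^ 2)⁻¹ = 2 * cosh (2 * arsinh x) := by
        rw [← exp_nat_mul, ← exp_neg, cosh_eq]; push_cast; ring_nf
    _ = 2 * (1 + 2 * sinh (arsinh x) ^ 2) := by rw [cosh_two_mul, cosh_sq]; ring
    _ = 2 * (1 + 2 * x ^ 2) := by rw [sinh_arsinh]

lemma X3_exp_arsinh (x : ℝ) :
    X3 (exp (arsinh x)) =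
      arsinh x ^ 2 / 8 + arsinh x * (x * √(1 + x ^ 2)) / 4 - (1 + 2 * x ^ 2) / 16 := by
  rw [X3, log_exp, exp_arsinh_sq_sub_inv, exp_arsinh_sq_add_inv]
  ring

lemma exp_arsinh_div {b : ℝ} (hb : 0 < b) (a : ℝ) :
    exp (arsinh (a / b)) = (a + √(a ^ 2 + b ^ 2)) / b := by
  have h : 1 + (a / b) ^ 2 = (a ^ 2 + b ^ 2) / b ^ 2 := by field_simp; ring
  rw [exp_arsinh, h, sqrt_div' _ (sq_nonneg b), sqrt_sq hb.le, add_div]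

lemma mul_sqrt_one_add_sq_le (x : ℝ) : x * √(1 + x ^ 2) ≤ x ^ 2 + 1 / 2 := by
  have hs := sq_sqrt (by positivity : (0:ℝ) ≤ 1 + x ^ 2)
  nlinarith [sq_nonneg (√(1 + x ^ 2) - x)]

lemma sq_le_mul_sqrt_one_add_sq {x : ℝ} (hx : 0 ≤ x) : x ^ 2 ≤ x * √(1 + x ^ 2) := by
  rw [sq]
  gcongr
  exact le_sqrt_of_sq_le (by linarith)

lemma log_two_mul_le_arsinh {x : ℝ} (hx : 0 < x) : log (2 * x) ≤ arsinh x := by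
  rw [← exp_le_exp, exp_log (by positivity), exp_arsinh, two_mul]
  gcongr
  exact le_sqrt_of_sq_le (by linarith)

lemma sq_mul_arsinh_sub_log_two_mul_le {x : ℝ} (hx : 0 < x) :
    x ^ 2 * (arsinh x - log (2 * x)) ≤ 1 / 4 := by
  have hpos : 0 < (x + √(1 + x ^ 2)) / (2 * x) := by positivity
  have hlog := log_le_sub_one_of_pos hpos
  rw [log_div (by positivity) (by positivity), ← arsinh] at hlog
  have key : x ^ 2 * ((x + √(1 + x ^ 2)) / (2 * x) - 1) = (x * √(1 + x ^ 2) - x ^ 2) / 2 := by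
    field_simp; ring
  nlinarith [mul_le_mul_of_nonneg_left hlog (sq_nonneg x), mul_sqrt_one_add_sq_le x]

/-- `(X₂(ξ, b) - ξ²(3/2 - 2 ln 2 + ln b - ln ξ)) / b²` in the variable `x = 2ξ/b`. -/
noncomputable def X2RescaledError (x : ℝ) : ℝ :=
  1 / 16 - arsinh x ^ 2 / 8 - arsinh x * (x * √(1 + x ^ 2) - x ^ 2) / 4 -
    x ^ 2 * (arsinh x - log (2 * x)) / 4

lemma X2_sub_eq_X2RescaledError {b ξ : ℝ} (hb : 0 < b) (hξ : 0 < ξ) :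
    ξ ^ 2 - b ^ 2 * X3 ((2 * ξ + √(4 * ξ ^ 2 + b ^ 2)) / b) -
        ξ ^ 2 * (3/2 - 2 * log 2 + log b - log ξ) =
      b ^ 2 * X2RescaledError (2 / b * ξ) := by
  set x := 2 / b * ξ with hx
  have hz : (2 * ξ + √(4 * ξ ^ 2 + b ^ 2)) / b = exp (arsinh x) := by
    rw [hx, ← mul_div_right_comm, exp_arsinh_div hb, mul_pow]
    norm_num
  have hlog : log (2 * x) = 2 * log 2 + log ξ - log b := by
    rw [hx, ← mul_assoc, log_mul (by positivity) hξ.ne', ← mul_div_assoc,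
      log_div (by norm_num) hb.ne', show (2:ℝ) * 2 = 2 ^ 2 by norm_num, log_pow]
    push_cast; ring
  have hξx : ξ ^ 2 = b ^ 2 * x ^ 2 / 4 := by rw [hx]; field_simp; ring
  rw [hz, X3_exp_arsinh, X2RescaledError, hlog]
  linear_combination (2 * log 2 - log b + log ξ - 1 / 2) * hξx

lemma isBigO_const_log_sq (c : ℝ) : (fun _ : ℝ => c) =O[atTop] fun x => log x ^ 2 := by
  simpa [sq] using (isLittleO_const_log_atTop (c := c)).isBigO.mul
    (isLittleO_const_log_atTop (c := 1)).isBigO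

lemma isBigO_mul_sqrt_one_add_sq_sub_sq :
    (fun x : ℝ => x * √(1 + x ^ 2) - x ^ 2) =O[atTop] fun _ => (1 : ℝ) := by
  refine IsBigO.of_bound (1 / 2) ?_
  filter_upwards [eventually_ge_atTop 0] with x hx
  rw [norm_one, mul_one, norm_of_nonneg (by linarith [sq_le_mul_sqrt_one_add_sq hx])]
  linarith [mul_sqrt_one_add_sq_le x]

lemma isBigO_sq_mul_arsinh_sub_log_two_mul :
    (fun x : ℝ => x ^ 2 * (arsinh x - log (2 * x))) =O[atTop] fun _ => (1 : ℝ) := by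
  refine IsBigO.of_bound (1 / 4) ?_
  filter_upwards [eventually_gt_atTop 0] with x hx
  rw [norm_one, mul_one, norm_of_nonneg (by have := log_two_mul_le_arsinh hx; positivity)]
  exact sq_mul_arsinh_sub_log_two_mul_le hx

lemma arsinh_isBigO_log : arsinh =O[atTop] log := by
  have hrem : (fun x => arsinh x - log (2 * x)) =O[atTop] fun _ => (1 : ℝ) := by
    refine (IsBigO.of_bound 1 ?_).trans isBigO_sq_mul_arsinh_sub_log_two_mul
    filter_upwards [eventually_ge_atTop 1] with x hx
    have h0 : 0 ≤ arsinh x - log (2 * x) := sub_nonneg.2 (log_two_mul_le_arsinh (by linarith))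
    rw [one_mul, norm_of_nonneg h0, norm_of_nonneg (by positivity)]
    exact le_mul_of_one_le_left h0 (one_le_pow₀ hx)
  refine ((hrem.trans isLittleO_const_log_atTop.isBigO).add
    (isBigO_log_const_mul_log_atTop 2)).congr_left fun x => ?_
  ring

lemma X2RescaledError_isBigO : X2RescaledError =O[atTop] fun x => log x ^ 2 := by
  have hsq : (fun x => log x ^ 2) = fun x => log x * log x := funext fun x => sq _
  have h1 : (fun x => arsinh x ^ 2) =O[atTop] fun x => log x ^ 2 := arsinh_isBigO_log.pow 2
  have h2 : (fun x => arsinh x * (x * √(1 + x ^ 2) - x ^ 2)) =O[atTop] fun x => log x ^ 2 :=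
    hsq ▸ arsinh_isBigO_log.mul
      (isBigO_mul_sqrt_one_add_sq_sub_sq.trans isLittleO_const_log_atTop.isBigO)
  have h3 := isBigO_sq_mul_arsinh_sub_log_two_mul.trans (isBigO_const_log_sq 1)
  refine ((((isBigO_const_log_sq (1 / 16)).sub (h1.const_mul_left (1 / 8))).sub
    (h2.const_mul_left (1 / 4))).sub (h3.const_mul_left (1 / 4))).congr_left fun x => ?_
  rw [X2RescaledError]
  ring

/-- Asymptotics of `X₂(ξ, b)` as `ξ → +∞`:
`X₂(ξ, b) = ξ²(3/2 − 2 ln 2 + ln b − ln ξ) + O(ln² ξ)`. -/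
theorem X2_asymptotics_at_infinity
    (b : ℝ) (hb : 0 < b) (X₃ : ℝ → ℝ) (X₂ : ℝ → ℝ)
    (hX₃ : ∀ z : ℝ, X₃ z =
      (1/8) * (Real.log z) ^ 2 + (1/16) * (z ^ 2 - (z ^ 2)⁻¹) * Real.log z -
      (1/32) * (z ^ 2 + (z ^ 2)⁻¹))
    (hX₂ : ∀ ξ : ℝ, X₂ ξ =
      ξ ^ 2 - b ^ 2 * X₃ ((2 * ξ + Real.sqrt (4 * ξ ^ 2 + b ^ 2)) / b)) :
    (fun ξ : ℝ => X₂ ξ -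
        ξ ^ 2 * (3/2 - 2 * Real.log 2 + Real.log b - Real.log ξ))
      =O[atTop] (fun ξ : ℝ => (Real.log ξ) ^ 2) := by
  obtain rfl : X₃ = X3 := funext hX₃
  have hscale : Tendsto (fun ξ : ℝ => 2 / b * ξ) atTop atTop :=
    tendsto_id.const_mul_atTop (by positivity)
  have hrescaled : (fun ξ => b ^ 2 * X2RescaledError (2 / b * ξ)) =O[atTop] fun ξ => log ξ ^ 2 :=
    ((X2RescaledError_isBigO.comp_tendsto hscale).trans
      ((isBigO_log_const_mul_log_atTop _).pow 2)).const_mul_left _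
  refine hrescaled.congr' ?_ EventuallyEq.rfl
  filter_upwards [eventually_gt_atTop 0] with ξ hξ
  rw [hX₂, X2_sub_eq_X2RescaledError hb hξ]
end
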